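/- Let R be a ring and let A, B, R₀, S be matrices over R giving a lag-ℓ shift equivalence from A to B (i.e. A^ℓ = R₀S, B^ℓ = SR₀, AR₀ = R₀B, SA = BS). Define over R[t] the block matrices U = [[1 + tA + ⋯ + (tA)^(ℓ-1), R₀],[-t^ℓ S, 1-tB]] and V = [[1-tA, -R₀],[t^ℓ S, 1 + tB + ⋯ + (tB)^(ℓ-1)]]. Then UV = I and VU = I; in particular U is invertible over R[t]. -/

import Mathlib

/-!
Over `R[t]` the quadruple `(tA, tB, R₀, t^ℓ S)` is again a lag-`ℓ` shift equivalence, because `t`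
is central. For any lag-`ℓ` shift equivalence `(A, B, R, S)` over a ring, the block products
`U V` and `V U` reduce to the telescoping identities `(∑_{i<ℓ} A^i)(1 - A) = 1 - A^ℓ = 1 - R S`
(and likewise for `B`), together with the intertwining relations `A^i R = R B^i`, `S A^i = B^i S`.
-/

open Polynomial Matrix

namespace Matrix

variable {K : Type*} {l n m : Type*}

theorem mul_smul_of_forall_commute [Semiring K] [Fintype n] {c : K} (hc : ∀ k, Commute c k)
    (M : Matrix l n K) (N : Matrix n m K) : M * (c • N) = c • (M * N) := by
  ext i j
  simp only [mul_apply, smul_apply, smul_eq_mul, Finset.sum_mul, ← mul_assoc, (hc _).eq]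

theorem smul_pow_of_forall_commute [Semiring K] [Fintype n] [DecidableEq n] {c : K}
    (hc : ∀ k, Commute c k) (M : Matrix n n K) (k : ℕ) : (c • M) ^ k = c ^ k • M ^ k := by
  induction k with
  | zero => simp
  | succ k ih =>
    rw [pow_succ, pow_succ, pow_succ, ih, smul_mul, mul_smul_of_forall_commute hc, smul_smul]

structure IsShiftEquiv [Semiring K] [Fintype n] [Fintype m] [DecidableEq n] [DecidableEq m]
    (ℓ : ℕ) (A : Matrix n n K) (B : Matrix m m K) (R : Matrix n m K) (S : Matrix m n K) : Prop where
  pow_left : A ^ ℓ = R * S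
  pow_right : B ^ ℓ = S * R
  mul_left : A * R = R * B
  mul_right : S * A = B * S

namespace IsShiftEquiv

section Semiring

variable [Semiring K] [Fintype n] [Fintype m] [DecidableEq n] [DecidableEq m] {ℓ : ℕ}
  {A : Matrix n n K} {B : Matrix m m K} {R : Matrix n m K} {S : Matrix m n K}

theorem map {L : Type*} [Semiring L] (h : IsShiftEquiv ℓ A B R S) (f : K →+* L) :
    IsShiftEquiv ℓ (A.map f) (B.map f) (R.map f) (S.map f) where
  pow_left := by rw [← Matrix.map_mul, ← h.pow_left]; exact (map_pow f.mapMatrix A ℓ).symm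
  pow_right := by rw [← Matrix.map_mul, ← h.pow_right]; exact (map_pow f.mapMatrix B ℓ).symm
  mul_left := by rw [← Matrix.map_mul, ← Matrix.map_mul, h.mul_left]
  mul_right := by rw [← Matrix.map_mul, ← Matrix.map_mul, h.mul_right]

theorem smul {c : K} (h : IsShiftEquiv ℓ A B R S) (hc : ∀ k, Commute c k) :
    IsShiftEquiv ℓ (c • A) (c • B) R (c ^ ℓ • S) where
  pow_left := by
    rw [smul_pow_of_forall_commute hc, h.pow_left,
      mul_smul_of_forall_commute fun k => (hc k).pow_left ℓ]
  pow_right := by rw [smul_pow_of_forall_commute hc, h.pow_right, smul_mul]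
  mul_left := by rw [smul_mul, h.mul_left, mul_smul_of_forall_commute hc]
  mul_right := by
    rw [smul_mul, mul_smul_of_forall_commute hc, smul_mul,
      mul_smul_of_forall_commute fun k => (hc k).pow_left ℓ, h.mul_right, smul_smul, smul_smul,
      ((hc c).pow_left ℓ).eq]

theorem pow_mul_left (h : IsShiftEquiv ℓ A B R S) (i : ℕ) : A ^ i * R = R * B ^ i := by
  induction i with
  | zero => simp
  | succ i ih => rw [pow_succ, pow_succ, Matrix.mul_assoc, h.mul_left, ← Matrix.mul_assoc, ih,
      Matrix.mul_assoc]

theorem mul_pow_right (h : IsShiftEquiv ℓ A B R S) (i : ℕ) : S * A ^ i = B ^ i * S := by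
  induction i with
  | zero => simp
  | succ i ih => rw [pow_succ, pow_succ, ← Matrix.mul_assoc, ih, Matrix.mul_assoc, h.mul_right,
      Matrix.mul_assoc]

theorem geom_sum_mul_left (h : IsShiftEquiv ℓ A B R S) (k : ℕ) :
    (∑ i ∈ Finset.range k, A ^ i) * R = R * ∑ i ∈ Finset.range k, B ^ i := by
  simp only [Matrix.sum_mul, Matrix.mul_sum, h.pow_mul_left]

theorem mul_geom_sum_right (h : IsShiftEquiv ℓ A B R S) (k : ℕ) :
    S * (∑ i ∈ Finset.range k, A ^ i) = (∑ i ∈ Finset.range k, B ^ i) * S := by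
  simp only [Matrix.sum_mul, Matrix.mul_sum, h.mul_pow_right]

end Semiring

variable [Ring K] [Fintype n] [Fintype m] [DecidableEq n] [DecidableEq m] {ℓ : ℕ}
  {A : Matrix n n K} {B : Matrix m m K} {R : Matrix n m K} {S : Matrix m n K}

theorem fromBlocks_mul_fromBlocks_eq_one (h : IsShiftEquiv ℓ A B R S) :
    fromBlocks (∑ i ∈ Finset.range ℓ, A ^ i) R (-S) (1 - B) *
      fromBlocks (1 - A) (-R) S (∑ i ∈ Finset.range ℓ, B ^ i) = 1 := by
  rw [fromBlocks_multiply, ← fromBlocks_one]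
  congr 1
  · rw [geom_sum_mul_neg, h.pow_left, sub_add_cancel]
  · rw [Matrix.mul_neg, h.geom_sum_mul_left, neg_add_cancel]
  · rw [Matrix.neg_mul, Matrix.mul_sub, Matrix.sub_mul, h.mul_right, Matrix.mul_one, Matrix.one_mul, neg_add_cancel]
  · rw [Matrix.neg_mul, Matrix.mul_neg, neg_neg, mul_neg_geom_sum, h.pow_right, add_sub_cancel]

theorem fromBlocks_mul_fromBlocks_eq_one' (h : IsShiftEquiv ℓ A B R S) :
    fromBlocks (1 - A) (-R) S (∑ i ∈ Finset.range ℓ, B ^ i) *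
      fromBlocks (∑ i ∈ Finset.range ℓ, A ^ i) R (-S) (1 - B) = 1 := by
  rw [fromBlocks_multiply, ← fromBlocks_one]
  congr 1
  · rw [mul_neg_geom_sum, Matrix.neg_mul, Matrix.mul_neg, neg_neg, h.pow_left, sub_add_cancel]
  · rw [Matrix.neg_mul, Matrix.mul_sub, Matrix.sub_mul, h.mul_left, Matrix.mul_one, Matrix.one_mul, add_neg_cancel]
  · rw [h.mul_geom_sum_right, Matrix.mul_neg, add_neg_cancel]
  · rw [geom_sum_mul_neg, h.pow_right, add_sub_cancel]

end IsShiftEquiv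

end Matrix

theorem pse_intertwiner_invertible_general (R : Type*) [Ring R] (n m ℓ : ℕ)
    (A : Matrix (Fin n) (Fin n) R) (B : Matrix (Fin m) (Fin m) R)
    (R₀ : Matrix (Fin n) (Fin m) R) (S : Matrix (Fin m) (Fin n) R)
    (h1 : A ^ ℓ = R₀ * S) (h2 : B ^ ℓ = S * R₀)
    (h3 : A * R₀ = R₀ * B) (h4 : S * A = B * S) :
    let tA : Matrix (Fin n) (Fin n) (Polynomial R) :=
      (X : Polynomial R) • A.map Polynomial.C
    let tB : Matrix (Fin m) (Fin m) (Polynomial R) :=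
      (X : Polynomial R) • B.map Polynomial.C
    let R₀' : Matrix (Fin n) (Fin m) (Polynomial R) := R₀.map Polynomial.C
    let S' : Matrix (Fin m) (Fin n) (Polynomial R) := S.map Polynomial.C
    let U : Matrix (Fin n ⊕ Fin m) (Fin n ⊕ Fin m) (Polynomial R) :=
      Matrix.fromBlocks (∑ i ∈ Finset.range ℓ, tA ^ i) R₀'
        (-((X : Polynomial R) ^ ℓ • S')) (1 - tB)
    let V : Matrix (Fin n ⊕ Fin m) (Fin n ⊕ Fin m) (Polynomial R) :=
      Matrix.fromBlocks (1 - tA) (-R₀')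
        ((X : Polynomial R) ^ ℓ • S') (∑ i ∈ Finset.range ℓ, tB ^ i)
    U * V = 1 ∧ V * U = 1 ∧ IsUnit U := by
  intro tA tB R₀' S' U V
  have hse : IsShiftEquiv ℓ tA tB R₀' ((X : Polynomial R) ^ ℓ • S') :=
    ((IsShiftEquiv.mk h1 h2 h3 h4).map Polynomial.C).smul Polynomial.commute_X
  have hUV : U * V = 1 := hse.fromBlocks_mul_fromBlocks_eq_one
  have hVU : V * U = 1 := hse.fromBlocks_mul_fromBlocks_eq_one'
  exact ⟨hUV, hVU, ⟨⟨U, V, hUV, hVU⟩, rfl⟩⟩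

/-- the intertwining matrix `U` of the PSE equation has the explicit
two-sided inverse `V` over `R[t]`; in particular `U` is invertible (a unit). -/
theorem pse_intertwiner_invertible (R : Type*) [Ring R] (n m ℓ : ℕ) (hℓ : 0 < ℓ)
    (A : Matrix (Fin n) (Fin n) R) (B : Matrix (Fin m) (Fin m) R)
    (R₀ : Matrix (Fin n) (Fin m) R) (S : Matrix (Fin m) (Fin n) R)
    (h1 : A ^ ℓ = R₀ * S) (h2 : B ^ ℓ = S * R₀)
    (h3 : A * R₀ = R₀ * B) (h4 : S * A = B * S) :
    let tA : Matrix (Fin n) (Fin n) (Polynomial R) :=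
      (X : Polynomial R) • A.map Polynomial.C
    let tB : Matrix (Fin m) (Fin m) (Polynomial R) :=
      (X : Polynomial R) • B.map Polynomial.C
    let R₀' : Matrix (Fin n) (Fin m) (Polynomial R) := R₀.map Polynomial.C
    let S' : Matrix (Fin m) (Fin n) (Polynomial R) := S.map Polynomial.C
    let U : Matrix (Fin n ⊕ Fin m) (Fin n ⊕ Fin m) (Polynomial R) :=
      Matrix.fromBlocks (∑ i ∈ Finset.range ℓ, tA ^ i) R₀'
        (-((X : Polynomial R) ^ ℓ • S')) (1 - tB)
    let V : Matrix (Fin n ⊕ Fin m) (Fin n ⊕ Fin m) (Polynomial R) :=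
      Matrix.fromBlocks (1 - tA) (-R₀')
        ((X : Polynomial R) ^ ℓ • S') (∑ i ∈ Finset.range ℓ, tB ^ i)
    U * V = 1 ∧ V * U = 1 ∧ IsUnit U :=
  pse_intertwiner_invertible_general R n m ℓ A B R₀ S h1 h2 h3 h4
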